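/- Fix k ≥ 2 and let u: [0,1] → M_k(ℂ) ⊗ M_k(ℂ) be any continuous path of unitaries with u_0 = 1 and u_1 = ∑_{i,j=1}^{k} e_{i,j} ⊗ e_{j,i}. Define w(t) = u_t + cos(πt/2)·(1 ⊗ e_{k+1,k+1}) ∈ M_k ⊗ M_{k+1} (regarding u_t ∈ M_k ⊗ M_k ⊂ M_k ⊗ M_{k+1} via the corner embedding), ψ(x)(t) = w(t)(x ⊗ 1)w(t)* for x ∈ M_k, v = ∑_{j=1}^{k} e_{1,j} ⊗ e_{j,k+1}, and s(t) = sin(πt/2)·w(t)v. Then: (i) for every x ∈ M_k, the function ψ(x) belongs to Z_{k,k+1}; (ii) the function s belongs to Z_{k,k+1} and is a contraction; (iii) s*s = 1 − ψ(1); (iv) ψ(e_{1,1})·s = s. -/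

import Mathlib

open scoped Kronecker Matrix.Norms.L2Operator ComplexOrder

/-- Membership in the dimension drop algebra
`Z_{p,q} = {f ∈ C([0,1], M_p ⊗ M_q) : f(0) ∈ M_p ⊗ 1, f(1) ∈ 1 ⊗ M_q}`,
where `M_p ⊗ M_q` is realized as matrices indexed by `Fin p × Fin q` via the Kronecker
product. -/
def MemDimDrop (p q : ℕ) (f : ℝ → Matrix (Fin p × Fin q) (Fin p × Fin q) ℂ) : Prop :=
  ContinuousOn f (Set.Icc 0 1) ∧
  (∃ A : Matrix (Fin p) (Fin p) ℂ, f 0 = A ⊗ₖ (1 : Matrix (Fin q) (Fin q) ℂ)) ∧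
  (∃ B : Matrix (Fin q) (Fin q) ℂ, f 1 = (1 : Matrix (Fin p) (Fin p) ℂ) ⊗ₖ B)

/-- The corner embedding `M_k ⊗ M_k ⊂ M_k ⊗ M_{k+1}`, given by the identity on the first
tensor factor and the upper-left corner embedding `M_k ⊂ M_{k+1}` on the second. -/
def cornerEmbed (k : ℕ) (A : Matrix (Fin k × Fin k) (Fin k × Fin k) ℂ) :
    Matrix (Fin k × Fin (k + 1)) (Fin k × Fin (k + 1)) ℂ :=
  Matrix.of fun x y =>
    if h : (x.2 : ℕ) < k ∧ (y.2 : ℕ) < k then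
      A (x.1, ⟨x.2, h.1⟩) (y.1, ⟨y.2, h.2⟩)
    else 0

/-- The path `w(t) = u_t + cos(πt/2)·(1 ⊗ e_{k+1,k+1}) ∈ M_k ⊗ M_{k+1}`, where
`u_t ∈ M_k ⊗ M_k` is regarded as an element of `M_k ⊗ M_{k+1}` via the corner embedding. -/
noncomputable def wPath (k : ℕ) (u : ℝ → Matrix (Fin k × Fin k) (Fin k × Fin k) ℂ)
    (t : ℝ) : Matrix (Fin k × Fin (k + 1)) (Fin k × Fin (k + 1)) ℂ :=
  cornerEmbed k (u t) +
    (Real.cos (Real.pi * t / 2) : ℂ) •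
      ((1 : Matrix (Fin k) (Fin k) ℂ) ⊗ₖ
        Matrix.single (Fin.last k) (Fin.last k) (1 : ℂ))

/-- The map `ψ(x)(t) = w(t) (x ⊗ 1) w(t)*` for `x ∈ M_k`. -/
noncomputable def psiMap (k : ℕ) (u : ℝ → Matrix (Fin k × Fin k) (Fin k × Fin k) ℂ)
    (x : Matrix (Fin k) (Fin k) ℂ) (t : ℝ) :
    Matrix (Fin k × Fin (k + 1)) (Fin k × Fin (k + 1)) ℂ :=
  wPath k u t * (x ⊗ₖ (1 : Matrix (Fin (k + 1)) (Fin (k + 1)) ℂ)) * star (wPath k u t)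

/-- The element `v = ∑_{j=1}^{k} e_{1,j} ⊗ e_{j,k+1} ∈ M_k ⊗ M_{k+1}` (`0`-indexed:
`v = ∑_j e_{0,j} ⊗ e_{j,k}`). -/
noncomputable def vElem (k : ℕ) (hk : 0 < k) :
    Matrix (Fin k × Fin (k + 1)) (Fin k × Fin (k + 1)) ℂ :=
  ∑ j : Fin k,
    Matrix.single (⟨0, hk⟩ : Fin k) j (1 : ℂ) ⊗ₖ
      Matrix.single j.castSucc (Fin.last k) (1 : ℂ)

/-- The function `s(t) = sin(πt/2)·w(t)·v`. -/
noncomputable def sElem (k : ℕ) (hk : 0 < k)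
    (u : ℝ → Matrix (Fin k × Fin k) (Fin k × Fin k) ℂ) (t : ℝ) :
    Matrix (Fin k × Fin (k + 1)) (Fin k × Fin (k + 1)) ℂ :=
  (Real.sin (Real.pi * t / 2) : ℂ) • (wPath k u t * vElem k hk)

/-!
Let `ι : ℂ^k → ℂ^{k+1}` be the corner inclusion, `J = 1 ⊗ ι`, `E = 1 ⊗ e_{k+1,k+1}` and `S` the
flip of `ℂ^k ⊗ ℂ^k`. Then `J*J = 1`, `JJ* + E = 1` and `EJ = 0`, so the corner embedding is
`A ↦ JAJ*`, and the "corner sums" `U ⊕ c = JUJ* + cE` multiply blockwise: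
`(U ⊕ c)(V ⊕ d) = UV ⊕ cd`. As `w(t) = u_t ⊕ cos(πt/2)`, unitarity of `u_t` gives
`w*w = ww* = 1 - sin²(πt/2) E`. The key observation is the factorisation
`v = J S (1 ⊗ e_{1,k+1})`: it gives `Ev = 0`, `v*v = E`, and, since `S (x ⊗ y) = (y ⊗ x) S`,
`(e_{1,1} ⊗ 1) v = v`. Hence `w*wv = v`, which yields `s*s = sin²(πt/2) E = 1 - ψ(1)`,
`ψ(e_{1,1}) s = s` and `‖s‖² = ‖s*s‖ ≤ 1`. At the endpoints `w(0) = 1` and `w(1) = JSJ*`, so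
`ψ(x)(0) = x ⊗ 1`, `ψ(x)(1) = J (1 ⊗ x) J* = 1 ⊗ ιxι*`, `s(0) = 0` and
`s(1) = J (1 ⊗ e_{1,k+1}) = 1 ⊗ ι e_{1,k+1}`.
-/

open Matrix

theorem Matrix.one_kronecker_mul_kronecker_mul_one_kronecker {R m n p q r s : Type*}
    [CommSemiring R] [Fintype m] [Fintype n] [Fintype p] [Fintype r] [DecidableEq m]
    [DecidableEq n] (B : Matrix q p R) (x : Matrix m n R) (y : Matrix p r R)
    (C : Matrix r s R) :
    ((1 : Matrix m m R) ⊗ₖ B) * (x ⊗ₖ y) * ((1 : Matrix n n R) ⊗ₖ C) = x ⊗ₖ (B * y * C) := by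
  rw [← mul_kronecker_mul, ← mul_kronecker_mul, Matrix.one_mul, Matrix.mul_one]

def tensorFlip (R n : Type*) [Semiring R] [Fintype n] [DecidableEq n] :
    Matrix (n × n) (n × n) R :=
  ∑ i : n, ∑ j : n, single i j (1 : R) ⊗ₖ single j i (1 : R)

section Flip
variable {R n : Type*} [CommSemiring R] [Fintype n] [DecidableEq n]

theorem tensorFlip_apply (p q r s : n) :
    tensorFlip R n (p, q) (r, s) = if p = s ∧ q = r then 1 else 0 := by
  simp [tensorFlip, Matrix.sum_apply, single_apply, ite_and, eq_comm]

theorem tensorFlip_mul_kronecker (x y : Matrix n n R) :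
    tensorFlip R n * (x ⊗ₖ y) = (y ⊗ₖ x) * tensorFlip R n := by
  ext ⟨p, q⟩ ⟨r, s⟩
  simp [mul_apply, Fintype.sum_prod_type, tensorFlip_apply, ite_and, mul_comm]

theorem tensorFlip_mul_self : tensorFlip R n * tensorFlip R n = 1 := by
  ext ⟨p, q⟩ ⟨r, s⟩
  simp [mul_apply, Fintype.sum_prod_type, tensorFlip_apply, ite_and, one_apply]

theorem conjTranspose_tensorFlip [StarRing R] : (tensorFlip R n)ᴴ = tensorFlip R n := by
  ext ⟨p, q⟩ ⟨r, s⟩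
  simp [tensorFlip_apply, apply_ite star, and_comm, eq_comm]

end Flip

theorem CStarRing.norm_le_one_of_star_mul_self_eq_smul {𝕜 E : Type*} [NormedField 𝕜]
    [NonUnitalNormedRing E] [StarRing E] [CStarRing E] [NormedSpace 𝕜 E] {a p : E} {r : 𝕜}
    (hp : IsStarProjection p) (hr : ‖r‖ ≤ 1) (h : star a * a = r • p) : ‖a‖ ≤ 1 := by
  have : ‖a‖ * ‖a‖ ≤ 1 := by
    rw [← CStarRing.norm_star_mul_self, h, norm_smul]
    exact mul_le_one₀ hr (norm_nonneg _) (hp.norm_le)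
  nlinarith [norm_nonneg a]

namespace RordamWinter
variable {k : ℕ}

def cornerIncl (k : ℕ) : Matrix (Fin (k + 1)) (Fin k) ℂ :=
  of fun i j => if i = j.castSucc then 1 else 0

theorem conjTranspose_cornerIncl_mul_self : (cornerIncl k)ᴴ * cornerIncl k = 1 := by
  ext i j
  simp [cornerIncl, mul_apply, one_apply, eq_comm]

theorem cornerIncl_mul_conjTranspose_add_single :
    cornerIncl k * (cornerIncl k)ᴴ + single (Fin.last k) (Fin.last k) (1 : ℂ) = 1 := by
  ext i j
  induction i using Fin.lastCases <;> induction j using Fin.lastCases <;>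
    simp [cornerIncl, mul_apply, one_apply, Fin.castSucc_ne_last, eq_comm]

theorem single_last_mul_cornerIncl :
    single (Fin.last k) (Fin.last k) (1 : ℂ) * cornerIncl k = 0 := by
  ext i j
  simp [cornerIncl, mul_apply, single_apply, (Fin.castSucc_lt_last j).ne']

def cornerIsometry (k : ℕ) : Matrix (Fin k × Fin (k + 1)) (Fin k × Fin k) ℂ :=
  (1 : Matrix (Fin k) (Fin k) ℂ) ⊗ₖ cornerIncl k

def lastProj (k : ℕ) : Matrix (Fin k × Fin (k + 1)) (Fin k × Fin (k + 1)) ℂ :=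
  (1 : Matrix (Fin k) (Fin k) ℂ) ⊗ₖ single (Fin.last k) (Fin.last k) (1 : ℂ)

theorem cornerEmbed_eq (A : Matrix (Fin k × Fin k) (Fin k × Fin k) ℂ) :
    cornerEmbed k A = cornerIsometry k * A * (cornerIsometry k)ᴴ := by
  ext ⟨p, q⟩ ⟨r, s⟩
  induction q using Fin.lastCases <;> induction s using Fin.lastCases <;>
    simp [cornerEmbed, cornerIsometry, cornerIncl, mul_apply, Fintype.sum_prod_type, one_apply,
      (Fin.castSucc_ne_last _).symm, apply_ite (starRingEnd ℂ), mul_ite]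

theorem conjTranspose_cornerIsometry_mul_self :
    (cornerIsometry k)ᴴ * cornerIsometry k = 1 := by
  rw [cornerIsometry, conjTranspose_kronecker, ← mul_kronecker_mul, conjTranspose_one, one_mul,
    conjTranspose_cornerIncl_mul_self, one_kronecker_one]

theorem cornerIsometry_mul_conjTranspose_add_lastProj :
    cornerIsometry k * (cornerIsometry k)ᴴ + lastProj k = 1 := by
  rw [cornerIsometry, lastProj, conjTranspose_kronecker, ← mul_kronecker_mul, conjTranspose_one,
    one_mul, ← kronecker_add, cornerIncl_mul_conjTranspose_add_single, one_kronecker_one]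

theorem lastProj_mul_cornerIsometry : lastProj k * cornerIsometry k = 0 := by
  rw [lastProj, cornerIsometry, ← mul_kronecker_mul, single_last_mul_cornerIncl, kronecker_zero]

theorem conjTranspose_lastProj : (lastProj k)ᴴ = lastProj k := by
  rw [lastProj, conjTranspose_kronecker, conjTranspose_one, conjTranspose_single, star_one]

theorem conjTranspose_cornerIsometry_mul_lastProj : (cornerIsometry k)ᴴ * lastProj k = 0 := by
  rw [← conjTranspose_lastProj, ← conjTranspose_mul, lastProj_mul_cornerIsometry,
    conjTranspose_zero]

theorem lastProj_mul_self : lastProj k * lastProj k = lastProj k := by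
  rw [lastProj, ← mul_kronecker_mul, one_mul, single_mul_single_same, one_mul]

theorem isStarProjection_lastProj : IsStarProjection (lastProj k) :=
  ⟨lastProj_mul_self, conjTranspose_lastProj⟩

def cornerSum (U : Matrix (Fin k × Fin k) (Fin k × Fin k) ℂ) (c : ℝ) :
    Matrix (Fin k × Fin (k + 1)) (Fin k × Fin (k + 1)) ℂ :=
  cornerIsometry k * U * (cornerIsometry k)ᴴ + (c : ℂ) • lastProj k

theorem conjTranspose_cornerSum (U : Matrix (Fin k × Fin k) (Fin k × Fin k) ℂ) (c : ℝ) :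
    (cornerSum U c)ᴴ = cornerSum Uᴴ c := by
  rw [cornerSum, cornerSum, conjTranspose_add, conjTranspose_smul, conjTranspose_lastProj,
    conjTranspose_mul, conjTranspose_mul, conjTranspose_conjTranspose, Matrix.mul_assoc,
    Complex.star_def, Complex.conj_ofReal]

theorem cornerSum_mul_cornerIsometry (U : Matrix (Fin k × Fin k) (Fin k × Fin k) ℂ) (c : ℝ) :
    cornerSum U c * cornerIsometry k = cornerIsometry k * U := by
  rw [cornerSum, Matrix.add_mul, Matrix.smul_mul, lastProj_mul_cornerIsometry, smul_zero,
    add_zero, Matrix.mul_assoc, conjTranspose_cornerIsometry_mul_self, Matrix.mul_one]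

theorem cornerSum_mul_cornerSum (U V : Matrix (Fin k × Fin k) (Fin k × Fin k) ℂ) (c d : ℝ) :
    cornerSum U c * cornerSum V d = cornerSum (U * V) (c * d) := by
  nth_rw 2 [cornerSum]
  rw [Matrix.mul_add, ← Matrix.mul_assoc, ← Matrix.mul_assoc,
    cornerSum_mul_cornerIsometry, Matrix.mul_smul, cornerSum, Matrix.add_mul,
    Matrix.mul_assoc _ (cornerIsometry k)ᴴ (lastProj k), conjTranspose_cornerIsometry_mul_lastProj,
    Matrix.mul_zero, zero_add,
    Matrix.smul_mul, lastProj_mul_self, smul_smul, cornerSum, ← Matrix.mul_assoc, mul_comm]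
  push_cast
  rfl

theorem cornerSum_one (c : ℝ) : cornerSum 1 c = 1 - ((1 - c : ℝ) : ℂ) • lastProj k := by
  rw [cornerSum, Matrix.mul_one, ← cornerIsometry_mul_conjTranspose_add_lastProj]
  push_cast
  module

theorem vElem_eq (hk : 0 < k) :
    vElem k hk = cornerIsometry k * tensorFlip ℂ (Fin k) *
      ((1 : Matrix (Fin k) (Fin k) ℂ) ⊗ₖ single (⟨0, hk⟩ : Fin k) (Fin.last k) (1 : ℂ)) := by
  ext ⟨p, q⟩ ⟨r, s⟩
  simp [vElem, cornerIsometry, cornerIncl, Matrix.sum_apply, Matrix.mul_apply,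
    Fintype.sum_prod_type, tensorFlip_apply, one_apply, single_apply, ite_and, eq_comm]
  rw [Finset.sum_comm]
  split_ifs <;> simp_all

theorem kronecker_one_mul_cornerIsometry (x : Matrix (Fin k) (Fin k) ℂ) :
    (x ⊗ₖ (1 : Matrix (Fin (k + 1)) (Fin (k + 1)) ℂ)) * cornerIsometry k =
      cornerIsometry k * (x ⊗ₖ (1 : Matrix (Fin k) (Fin k) ℂ)) := by
  rw [cornerIsometry, ← mul_kronecker_mul, ← mul_kronecker_mul, Matrix.one_mul, Matrix.mul_one,
    Matrix.one_mul, Matrix.mul_one]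

theorem conjTranspose_cornerIsometry_mul_kronecker_one_mul_cornerIsometry
    (x : Matrix (Fin k) (Fin k) ℂ) :
    (cornerIsometry k)ᴴ * (x ⊗ₖ (1 : Matrix (Fin (k + 1)) (Fin (k + 1)) ℂ)) * cornerIsometry k =
      x ⊗ₖ (1 : Matrix (Fin k) (Fin k) ℂ) := by
  rw [cornerIsometry, conjTranspose_kronecker, conjTranspose_one,
    one_kronecker_mul_kronecker_mul_one_kronecker, Matrix.mul_one,
    conjTranspose_cornerIncl_mul_self]

theorem lastProj_mul_vElem (hk : 0 < k) : lastProj k * vElem k hk = 0 := by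
  rw [vElem_eq, ← Matrix.mul_assoc, ← Matrix.mul_assoc, lastProj_mul_cornerIsometry,
    Matrix.zero_mul, Matrix.zero_mul]

theorem conjTranspose_vElem_mul_self (hk : 0 < k) : (vElem k hk)ᴴ * vElem k hk = lastProj k := by
  have hJS :
      (cornerIsometry k * tensorFlip ℂ (Fin k))ᴴ * (cornerIsometry k * tensorFlip ℂ (Fin k)) =
        1 := by
    rw [conjTranspose_mul, Matrix.mul_assoc, ← Matrix.mul_assoc (cornerIsometry k)ᴴ,
      conjTranspose_cornerIsometry_mul_self, Matrix.one_mul, conjTranspose_tensorFlip,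
      tensorFlip_mul_self]
  rw [vElem_eq, conjTranspose_mul, Matrix.mul_assoc, ← Matrix.mul_assoc _ (cornerIsometry k * _),
    hJS, Matrix.one_mul, conjTranspose_kronecker, ← mul_kronecker_mul, conjTranspose_one,
    Matrix.one_mul, conjTranspose_single, single_mul_single_same, star_one, one_mul, lastProj]

theorem single_zero_kronecker_one_mul_vElem (hk : 0 < k) :
    (single (⟨0, hk⟩ : Fin k) ⟨0, hk⟩ (1 : ℂ) ⊗ₖ (1 : Matrix (Fin (k + 1)) (Fin (k + 1)) ℂ)) *
      vElem k hk = vElem k hk := by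
  rw [vElem_eq, ← Matrix.mul_assoc, ← Matrix.mul_assoc, kronecker_one_mul_cornerIsometry,
    Matrix.mul_assoc (cornerIsometry k), ← tensorFlip_mul_kronecker, Matrix.mul_assoc,
    Matrix.mul_assoc, ← mul_kronecker_mul, Matrix.one_mul, single_mul_single_same, one_mul,
    Matrix.mul_assoc]

theorem cornerSum_tensorFlip_mul_vElem (hk : 0 < k) :
    cornerSum (tensorFlip ℂ (Fin k)) 0 * vElem k hk =
      (1 : Matrix (Fin k) (Fin k) ℂ) ⊗ₖ
        (cornerIncl k * single (⟨0, hk⟩ : Fin k) (Fin.last k) (1 : ℂ)) := by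
  rw [vElem_eq, ← Matrix.mul_assoc, ← Matrix.mul_assoc, cornerSum_mul_cornerIsometry,
    Matrix.mul_assoc (cornerIsometry k), tensorFlip_mul_self, Matrix.mul_one, cornerIsometry,
    ← mul_kronecker_mul, Matrix.one_mul]

theorem cornerSum_tensorFlip_mul_kronecker_one_mul_conjTranspose (x : Matrix (Fin k) (Fin k) ℂ) :
    cornerSum (tensorFlip ℂ (Fin k)) 0 * (x ⊗ₖ (1 : Matrix (Fin (k + 1)) (Fin (k + 1)) ℂ)) *
        (cornerSum (tensorFlip ℂ (Fin k)) 0)ᴴ =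
      (1 : Matrix (Fin k) (Fin k) ℂ) ⊗ₖ (cornerIncl k * x * (cornerIncl k)ᴴ) := by
  have hS : cornerSum (tensorFlip ℂ (Fin k)) 0 =
      cornerIsometry k * tensorFlip ℂ (Fin k) * (cornerIsometry k)ᴴ := by
    rw [cornerSum, Complex.ofReal_zero, zero_smul, add_zero]
  rw [conjTranspose_cornerSum, conjTranspose_tensorFlip, hS]
  calc _ = cornerIsometry k * tensorFlip ℂ (Fin k) *
          ((cornerIsometry k)ᴴ * (x ⊗ₖ (1 : Matrix (Fin (k + 1)) (Fin (k + 1)) ℂ)) *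
            cornerIsometry k) * tensorFlip ℂ (Fin k) * (cornerIsometry k)ᴴ := by
        simp only [Matrix.mul_assoc]
    _ = cornerIsometry k * (tensorFlip ℂ (Fin k) * (x ⊗ₖ (1 : Matrix (Fin k) (Fin k) ℂ)) *
          tensorFlip ℂ (Fin k)) * (cornerIsometry k)ᴴ := by
        rw [conjTranspose_cornerIsometry_mul_kronecker_one_mul_cornerIsometry]
        simp only [Matrix.mul_assoc]
    _ = cornerIsometry k * ((1 : Matrix (Fin k) (Fin k) ℂ) ⊗ₖ x) * (cornerIsometry k)ᴴ := by
        rw [tensorFlip_mul_kronecker, Matrix.mul_assoc _ (tensorFlip ℂ (Fin k)),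
          tensorFlip_mul_self, Matrix.mul_one]
    _ = _ := by
        rw [cornerIsometry, conjTranspose_kronecker, conjTranspose_one,
          one_kronecker_mul_kronecker_mul_one_kronecker]

theorem conjTranspose_cornerSum_mul_self {U : Matrix (Fin k × Fin k) (Fin k × Fin k) ℂ}
    (hU : U ∈ unitaryGroup (Fin k × Fin k) ℂ) (c : ℝ) :
    (cornerSum U c)ᴴ * cornerSum U c = 1 - ((1 - c ^ 2 : ℝ) : ℂ) • lastProj k := by
  rw [conjTranspose_cornerSum, cornerSum_mul_cornerSum, ← star_eq_conjTranspose,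
    Matrix.mem_unitaryGroup_iff'.mp hU, ← sq, cornerSum_one]

theorem cornerSum_mul_conjTranspose_self {U : Matrix (Fin k × Fin k) (Fin k × Fin k) ℂ}
    (hU : U ∈ unitaryGroup (Fin k × Fin k) ℂ) (c : ℝ) :
    cornerSum U c * (cornerSum U c)ᴴ = 1 - ((1 - c ^ 2 : ℝ) : ℂ) • lastProj k := by
  rw [conjTranspose_cornerSum, cornerSum_mul_cornerSum, ← star_eq_conjTranspose,
    Matrix.mem_unitaryGroup_iff.mp hU, ← sq, cornerSum_one]

theorem wPath_eq (u : ℝ → Matrix (Fin k × Fin k) (Fin k × Fin k) ℂ) (t : ℝ) :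
    wPath k u t = cornerSum (u t) (Real.cos (Real.pi * t / 2)) := by
  rw [wPath, cornerEmbed_eq]
  rfl

variable {u : ℝ → Matrix (Fin k × Fin k) (Fin k × Fin k) ℂ} {t : ℝ}

theorem continuousOn_wPath (hu : ContinuousOn u (Set.Icc 0 1)) :
    ContinuousOn (wPath k u) (Set.Icc 0 1) := by
  simp_rw [funext (wPath_eq u), cornerSum]
  fun_prop

theorem wPath_zero (hu0 : u 0 = 1) : wPath k u 0 = 1 := by
  rw [wPath_eq, hu0, mul_zero, zero_div, Real.cos_zero, cornerSum_one, sub_self,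
    Complex.ofReal_zero, zero_smul, sub_zero]

theorem wPath_one {U : Matrix (Fin k × Fin k) (Fin k × Fin k) ℂ} (hu1 : u 1 = U) :
    wPath k u 1 = cornerSum U 0 := by
  rw [wPath_eq, hu1, mul_one, Real.cos_pi_div_two]

theorem conjTranspose_wPath_mul_self (ht : u t ∈ unitaryGroup (Fin k × Fin k) ℂ) :
    (wPath k u t)ᴴ * wPath k u t =
      1 - ((Real.sin (Real.pi * t / 2) ^ 2 : ℝ) : ℂ) • lastProj k := by
  rw [wPath_eq, conjTranspose_cornerSum_mul_self ht, ← Real.sin_sq]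

theorem wPath_mul_conjTranspose_self (ht : u t ∈ unitaryGroup (Fin k × Fin k) ℂ) :
    wPath k u t * (wPath k u t)ᴴ =
      1 - ((Real.sin (Real.pi * t / 2) ^ 2 : ℝ) : ℂ) • lastProj k := by
  rw [wPath_eq, cornerSum_mul_conjTranspose_self ht, ← Real.sin_sq]

theorem conjTranspose_wPath_mul_wPath_mul_vElem (hk : 0 < k)
    (ht : u t ∈ unitaryGroup (Fin k × Fin k) ℂ) :
    (wPath k u t)ᴴ * (wPath k u t * vElem k hk) = vElem k hk := by
  rw [← Matrix.mul_assoc, conjTranspose_wPath_mul_self ht, Matrix.sub_mul, Matrix.smul_mul,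
    lastProj_mul_vElem, smul_zero, sub_zero, Matrix.one_mul]

theorem psiMap_one (ht : u t ∈ unitaryGroup (Fin k × Fin k) ℂ) :
    psiMap k u 1 t = 1 - ((Real.sin (Real.pi * t / 2) ^ 2 : ℝ) : ℂ) • lastProj k := by
  rw [psiMap, one_kronecker_one, Matrix.mul_one, star_eq_conjTranspose,
    wPath_mul_conjTranspose_self ht]

theorem star_sElem_mul_self (hk : 0 < k) (ht : u t ∈ unitaryGroup (Fin k × Fin k) ℂ) :
    star (sElem k hk u t) * sElem k hk u t =
      ((Real.sin (Real.pi * t / 2) ^ 2 : ℝ) : ℂ) • lastProj k := by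
  rw [sElem, star_smul, Complex.star_def, Complex.conj_ofReal, star_eq_conjTranspose,
    conjTranspose_mul, Matrix.smul_mul, Matrix.mul_smul, smul_smul, Matrix.mul_assoc,
    conjTranspose_wPath_mul_wPath_mul_vElem hk ht, conjTranspose_vElem_mul_self, ← sq,
    Complex.ofReal_pow]

theorem star_sElem_mul_self_eq_one_sub_psiMap (hk : 0 < k)
    (ht : u t ∈ unitaryGroup (Fin k × Fin k) ℂ) :
    star (sElem k hk u t) * sElem k hk u t = 1 - psiMap k u 1 t := by
  rw [psiMap_one ht, sub_sub_cancel, star_sElem_mul_self hk ht]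

theorem norm_sElem_le_one (hk : 0 < k) (ht : u t ∈ unitaryGroup (Fin k × Fin k) ℂ) :
    ‖sElem k hk u t‖ ≤ 1 := by
  refine CStarRing.norm_le_one_of_star_mul_self_eq_smul isStarProjection_lastProj ?_
    (star_sElem_mul_self hk ht)
  rw [Complex.norm_real, Real.norm_eq_abs, abs_of_nonneg (sq_nonneg _)]
  exact (sq_le_one_iff_abs_le_one _).mpr (Real.abs_sin_le_one _)

theorem psiMap_single_mul_sElem (hk : 0 < k) (ht : u t ∈ unitaryGroup (Fin k × Fin k) ℂ) :
    psiMap k u (single (⟨0, hk⟩ : Fin k) ⟨0, hk⟩ (1 : ℂ)) t * sElem k hk u t =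
      sElem k hk u t := by
  rw [psiMap, sElem, Matrix.mul_smul, star_eq_conjTranspose, Matrix.mul_assoc,
    conjTranspose_wPath_mul_wPath_mul_vElem hk ht, Matrix.mul_assoc,
    single_zero_kronecker_one_mul_vElem]

theorem memDimDrop_psiMap (hu : ContinuousOn u (Set.Icc 0 1)) (hu0 : u 0 = 1)
    (hu1 : u 1 = tensorFlip ℂ (Fin k)) (x : Matrix (Fin k) (Fin k) ℂ) :
    MemDimDrop k (k + 1) (psiMap k u x) := by
  refine ⟨((continuousOn_wPath hu).mul continuousOn_const).mul (continuousOn_wPath hu).star,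
    ⟨x, ?_⟩, ⟨cornerIncl k * x * (cornerIncl k)ᴴ, ?_⟩⟩
  · rw [psiMap, wPath_zero hu0, star_one, Matrix.one_mul, Matrix.mul_one]
  · rw [psiMap, wPath_one hu1, star_eq_conjTranspose,
      cornerSum_tensorFlip_mul_kronecker_one_mul_conjTranspose]

theorem memDimDrop_sElem (hk : 0 < k) (hu : ContinuousOn u (Set.Icc 0 1))
    (hu1 : u 1 = tensorFlip ℂ (Fin k)) : MemDimDrop k (k + 1) (sElem k hk u) := by
  refine ⟨?_, ⟨0, ?_⟩, ⟨cornerIncl k * single (⟨0, hk⟩ : Fin k) (Fin.last k) (1 : ℂ), ?_⟩⟩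
  · have hsin : Continuous fun t : ℝ ↦ (Real.sin (Real.pi * t / 2) : ℂ) := by fun_prop
    exact hsin.continuousOn.smul ((continuousOn_wPath hu).mul continuousOn_const)
  · rw [sElem, mul_zero, zero_div, Real.sin_zero, Complex.ofReal_zero, zero_smul, zero_kronecker]
  · rw [sElem, mul_one, Real.sin_pi_div_two, Complex.ofReal_one, one_smul, wPath_one hu1,
      cornerSum_tensorFlip_mul_vElem]

end RordamWinter

theorem rordamWinter_generators_of_dimension_drop (k : ℕ) (hk : 2 ≤ k)
    (u : ℝ → Matrix (Fin k × Fin k) (Fin k × Fin k) ℂ)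
    (hu_cont : ContinuousOn u (Set.Icc 0 1))
    (hu_unitary : ∀ t ∈ Set.Icc (0 : ℝ) 1, u t ∈ Matrix.unitaryGroup (Fin k × Fin k) ℂ)
    (hu0 : u 0 = 1)
    (hu1 : u 1 = ∑ i : Fin k, ∑ j : Fin k,
      Matrix.single i j (1 : ℂ) ⊗ₖ Matrix.single j i (1 : ℂ)) :
    -- (i) each ψ(x) belongs to Z_{k,k+1}
    (∀ x : Matrix (Fin k) (Fin k) ℂ, MemDimDrop k (k + 1) (psiMap k u x)) ∧
    -- (ii) s belongs to Z_{k,k+1} and is a contraction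
    MemDimDrop k (k + 1) (sElem k (by omega) u) ∧
    (∀ t ∈ Set.Icc (0 : ℝ) 1, ‖sElem k (by omega) u t‖ ≤ 1) ∧
    -- (iii) s*s = 1 - ψ(1)
    (∀ t ∈ Set.Icc (0 : ℝ) 1,
      star (sElem k (by omega) u t) * sElem k (by omega) u t = 1 - psiMap k u 1 t) ∧
    -- (iv) ψ(e_{1,1})·s = s
    (∀ t ∈ Set.Icc (0 : ℝ) 1,
      psiMap k u (Matrix.single (⟨0, by omega⟩ : Fin k) (⟨0, by omega⟩ : Fin k)
          (1 : ℂ)) t * sElem k (by omega) u t = sElem k (by omega) u t) := by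
  have hk0 : 0 < k := by omega
  have hflip : u 1 = tensorFlip ℂ (Fin k) := hu1
  exact ⟨RordamWinter.memDimDrop_psiMap hu_cont hu0 hflip,
    RordamWinter.memDimDrop_sElem hk0 hu_cont hflip,
    fun t ht ↦ RordamWinter.norm_sElem_le_one hk0 (hu_unitary t ht),
    fun t ht ↦ RordamWinter.star_sElem_mul_self_eq_one_sub_psiMap hk0 (hu_unitary t ht),
    fun t ht ↦ RordamWinter.psiMap_single_mul_sElem hk0 (hu_unitary t ht)⟩
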